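/- Let F₂ be the free group on {x, y}. Define u₁ = x⁻²y⁻¹x and u_{n+1} = [x u_n x⁻¹, y u_n y⁻¹] (commutator [a,b] = aba⁻¹b⁻¹). Then for every n ≥ 1, u_n lies in the (n−1)-st term F₂^{(n−1)} of the derived series of F₂, and the word length of u_n with respect to {x, y} is at most 4^{n+1}. -/

import Mathlib

/-- `γ` is a product of at most `n` elements of `X ∪ X⁻¹`. -/
def wordLenLE {G : Type*} [Group G] (X : Set G) (γ : G) (n : ℕ) : Prop :=
  ∃ w : List G, w.length ≤ n ∧ (∀ x ∈ w, x ∈ X ∨ x⁻¹ ∈ X) ∧ w.prod = γ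

/-- The generators `x`, `y` of the free group on `{x, y}`. -/
def xgen : FreeGroup Bool := FreeGroup.of false
def ygen : FreeGroup Bool := FreeGroup.of true

open scoped commutatorElement

/-- `u₁ = x⁻²y⁻¹x`, `u_{n+1} = [x u_n x⁻¹, y u_n y⁻¹]`.  (`useq 0` is a dummy value.) -/
def useq : ℕ → FreeGroup Bool
  | 0 => 1
  | 1 => xgen⁻¹ * xgen⁻¹ * (ygen⁻¹ * xgen)
  | (n + 2) => ⁅xgen * useq (n + 1) * xgen⁻¹, ygen * useq (n + 1) * ygen⁻¹⁆

/-! Induction on `n`: conjugates of an element of `Γ^{(n)}` stay in `Γ^{(n)}`, and their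
commutator lands in `Γ^{(n+1)}`. Conjugating by a generator adds two letters and a commutator
doubles the total length, so the lengths satisfy `L₁ = 4`, `L_{n+1} ≤ 4 L_n + 8`, which keeps
them below `4^{n+1} - 8`. -/

section WordLength

variable {G : Type*} [Group G] {X : Set G}

lemma wordLenLE.mono {g : G} {m n : ℕ} (hg : wordLenLE X g m) (hmn : m ≤ n) :
    wordLenLE X g n := by
  obtain ⟨w, hw, hwX, rfl⟩ := hg
  exact ⟨w, hw.trans hmn, hwX, rfl⟩

lemma wordLenLE_of_mem {a : G} (ha : a ∈ X) : wordLenLE X a 1 :=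
  ⟨[a], by simp, by simpa using Or.inl ha, by simp⟩

lemma wordLenLE.mul {g h : G} {m n : ℕ} (hg : wordLenLE X g m) (hh : wordLenLE X h n) :
    wordLenLE X (g * h) (m + n) := by
  obtain ⟨v, hv, hvX, rfl⟩ := hg
  obtain ⟨w, hw, hwX, rfl⟩ := hh
  refine ⟨v ++ w, by simpa using Nat.add_le_add hv hw, ?_, List.prod_append⟩
  intro x hx
  rcases List.mem_append.1 hx with hx | hx
  exacts [hvX x hx, hwX x hx]

lemma wordLenLE.inv {g : G} {n : ℕ} (hg : wordLenLE X g n) : wordLenLE X g⁻¹ n := by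
  obtain ⟨w, hw, hwX, rfl⟩ := hg
  refine ⟨(w.map Inv.inv).reverse, by simpa using hw, ?_, (List.prod_inv_reverse w).symm⟩
  simp only [List.mem_reverse, List.mem_map, forall_exists_index, and_imp,
    forall_apply_eq_imp_iff₂, inv_inv]
  exact fun x hx => (hwX x hx).symm

lemma wordLenLE.conj {a g : G} {n : ℕ} (ha : a ∈ X) (hg : wordLenLE X g n) :
    wordLenLE X (a * g * a⁻¹) (n + 2) := by
  have h := ((wordLenLE_of_mem ha).mul hg).mul (wordLenLE_of_mem ha).inv
  exact h.mono (by omega)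

lemma wordLenLE.commutatorElement {g h : G} {m n : ℕ} (hg : wordLenLE X g m)
    (hh : wordLenLE X h n) : wordLenLE X ⁅g, h⁆ (2 * (m + n)) := by
  have h := ((hg.mul hh).mul hg.inv).mul hh.inv
  rw [← commutatorElement_def] at h
  exact h.mono (by omega)

end WordLength

lemma commutatorElement_mem_derivedSeries_succ {G : Type*} [Group G] {n : ℕ} {g h : G}
    (hg : g ∈ derivedSeries G n) (hh : h ∈ derivedSeries G n) :
    ⁅g, h⁆ ∈ derivedSeries G (n + 1) := by
  rw [derivedSeries_succ]
  exact Subgroup.commutator_mem_commutator hg hh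

lemma useq_succ_succ (n : ℕ) :
    useq (n + 2) = ⁅xgen * useq (n + 1) * xgen⁻¹, ygen * useq (n + 1) * ygen⁻¹⁆ := rfl

lemma useq_succ_mem_derivedSeries (n : ℕ) : useq (n + 1) ∈ derivedSeries (FreeGroup Bool) n := by
  induction n with
  | zero => simp
  | succ n ih =>
    have hnormal := derivedSeries_normal (FreeGroup Bool) n
    rw [useq_succ_succ]
    exact commutatorElement_mem_derivedSeries_succ (hnormal.conj_mem _ ih _)
      (hnormal.conj_mem _ ih _)

lemma wordLenLE_useq_succ (n : ℕ) : wordLenLE {xgen, ygen} (useq (n + 1)) (4 ^ (n + 2) - 8) := by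
  have hx : xgen ∈ ({xgen, ygen} : Set (FreeGroup Bool)) := Set.mem_insert _ _
  have hy : ygen ∈ ({xgen, ygen} : Set (FreeGroup Bool)) := Set.mem_insert_of_mem _ rfl
  induction n with
  | zero =>
    exact (((wordLenLE_of_mem hx).inv.mul (wordLenLE_of_mem hx).inv).mul
      ((wordLenLE_of_mem hy).inv.mul (wordLenLE_of_mem hx))).mono (by norm_num)
  | succ n ih =>
    rw [useq_succ_succ]
    refine ((ih.conj hx).commutatorElement (ih.conj hy)).mono ?_
    have h16 : 4 ^ 2 ≤ 4 ^ (n + 2) := Nat.pow_le_pow_right (by norm_num) (by omega)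
    have hpow : 4 ^ (n + 1 + 2) = 4 ^ (n + 2) * 4 := pow_succ 4 (n + 2)
    omega

theorem stmt17 (n : ℕ) (hn : 1 ≤ n) :
    useq n ∈ derivedSeries (FreeGroup Bool) (n - 1) ∧
      wordLenLE {xgen, ygen} (useq n) (4 ^ (n + 1)) := by
  obtain ⟨m, rfl⟩ := Nat.exists_eq_add_of_le' hn
  exact ⟨useq_succ_mem_derivedSeries m, (wordLenLE_useq_succ m).mono (Nat.sub_le _ _)⟩
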